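/- Truncation residual identity for the Hermite expansion: let N ≥ 1 and suppose C_0,…,C_{N−1} : [0,∞) × ℝ → ℝ are C¹ functions and E : [0,∞) × ℝ → ℝ is continuous, satisfying (with the conventions C_{−1} = C_N = 0) the mode equations ∂_t C_n + v_th (√(n+1) ∂_x C_{n+1} + √n ∂_x C_{n−1}) − (√n / v_th) E C_{n−1} = 0 for 0 ≤ n ≤ N−1. Define f(t,x,v) = Σ_{n=0}^{N−1} C_n(t,x) Ψ_n(v). Then for all (t,x,v): ∂_t f + v ∂_x f + E(t,x) ∂_v f = √N · ( v_th ∂_x C_{N−1}(t,x) − (1/v_th) E(t,x) C_{N−1}(t,x) ) · Ψ_N(v). In particular, if the mode equations held for all n ∈ ℕ the expansion would solve the Vlasov equation exactly. -/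

import Mathlib

open MeasureTheory

/-- The normalized probabilists' Hermite polynomials, defined by `H_0 = 1`,
`H_1 ξ = ξ` (from `√1·H_1 = ξ·H_0 − √0·H_{−1}`) and
`√n · H_n(ξ) = ξ · H_{n−1}(ξ) − √(n−1) · H_{n−2}(ξ)`. -/
noncomputable def normHermite : ℕ → ℝ → ℝ
  | 0, _ => 1
  | 1, ξ => ξ
  | (n + 2), ξ =>
      (ξ * normHermite (n + 1) ξ - Real.sqrt (n + 1) * normHermite n ξ) /
        Real.sqrt (n + 2)

/-- The asymmetrically weighted Hermite functions
`Ψ_n(v) = H_n(v/v_th) · e^{−v²/(2 v_th²)} / √(2π)`. -/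
noncomputable def Psi (vth : ℝ) (n : ℕ) (v : ℝ) : ℝ :=
  normHermite n (v / vth) * Real.exp (-(v ^ 2) / (2 * vth ^ 2)) / Real.sqrt (2 * Real.pi)

/-! The Hermite functions `Ψ_n` satisfy the three-term recurrence
`v Ψ_n = v_th (√(n+1) Ψ_{n+1} + √n Ψ_{n-1})` and the ladder relation
`Ψ_n' = -(√(n+1) / v_th) Ψ_{n+1}`. Applying the Vlasov operator to `f = Σ_{n<N} C_n Ψ_n` and
re-expanding in the `Ψ_m`, the coefficient of `Ψ_m` for `m < N` is exactly the `m`-th mode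
equation, so only the boundary terms survive: the `Ψ_N` terms that `v` and `∂_v` produce from
`C_{N-1} Ψ_{N-1}`, and a `Ψ_{N-1}` term carrying `∂_x C_N = 0`. -/

open Finset

/-- At `n = 0` the truncated index `n - 1 = 0` is harmless because `√0 = 0`. -/
lemma sqrt_mul_normHermite_succ (n : ℕ) (ξ : ℝ) :
    Real.sqrt (n + 1) * normHermite (n + 1) ξ
      = ξ * normHermite n ξ - Real.sqrt n * normHermite (n - 1) ξ := by
  match n with
  | 0 => simp [normHermite]
  | m + 1 =>
    have hm : Real.sqrt ((m : ℝ) + 2) ≠ 0 := by positivity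
    simp only [normHermite, Nat.add_sub_cancel]
    push_cast
    rw [show (m : ℝ) + 1 + 1 = m + 2 by ring, mul_div_cancel₀ _ hm]

lemma hasDerivAt_normHermite : ∀ (n : ℕ) (ξ : ℝ),
    HasDerivAt (normHermite n) (Real.sqrt n * normHermite (n - 1) ξ) ξ
  | 0, ξ => (hasDerivAt_const ξ (1 : ℝ)).congr_deriv (by simp)
  | 1, ξ => (hasDerivAt_id ξ).congr_deriv (by simp [normHermite])
  | n + 2, ξ => by
    have hd := (((hasDerivAt_id ξ).mul (hasDerivAt_normHermite (n + 1) ξ)).sub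
      ((hasDerivAt_normHermite n ξ).const_mul (Real.sqrt (n + 1)))).div_const (Real.sqrt (n + 2))
    -- the recurrence turns `ξ H_{n+1}' - √(n+1) H_n'` into `(n+1) H_{n+1}`, leaving `(n+2) H_{n+1} / √(n+2)`
    refine hd.congr_deriv ?_
    have hrec := sqrt_mul_normHermite_succ n ξ
    have hsq₁ : Real.sqrt ((n : ℝ) + 1) * Real.sqrt (n + 1) = n + 1 :=
      Real.mul_self_sqrt (by positivity)
    have hsq₂ : Real.sqrt ((n : ℝ) + 2) * Real.sqrt (n + 2) = n + 2 :=
      Real.mul_self_sqrt (by positivity)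
    have hne : Real.sqrt ((n : ℝ) + 2) ≠ 0 := by positivity
    simp only [Nat.add_sub_cancel, id_eq]
    push_cast
    rw [div_eq_iff hne]
    linear_combination -(Real.sqrt ((n : ℝ) + 1) * hrec) - normHermite (n + 1) ξ * hsq₂ +
      normHermite (n + 1) ξ * hsq₁

lemma mul_Psi {vth : ℝ} (hvth : vth ≠ 0) (n : ℕ) (v : ℝ) :
    v * Psi vth n v
      = vth * (Real.sqrt (n + 1) * Psi vth (n + 1) v + Real.sqrt n * Psi vth (n - 1) v) := by
  have hrec := sqrt_mul_normHermite_succ n (v / vth)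
  have hv : vth * (v / vth) = v := mul_div_cancel₀ v hvth
  simp only [Psi]
  linear_combination
    (-(vth * Real.exp (-(v ^ 2) / (2 * vth ^ 2)) / Real.sqrt (2 * Real.pi))) * hrec
    - (normHermite n (v / vth) * Real.exp (-(v ^ 2) / (2 * vth ^ 2))
      / Real.sqrt (2 * Real.pi)) * hv

lemma hasDerivAt_Psi (vth : ℝ) (n : ℕ) (v : ℝ) :
    HasDerivAt (Psi vth n) (-(Real.sqrt (n + 1) / vth) * Psi vth (n + 1) v) v := by
  have hH : HasDerivAt (fun w => normHermite n (w / vth))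
      (Real.sqrt n * normHermite (n - 1) (v / vth) * (1 / vth)) v :=
    (hasDerivAt_normHermite n (v / vth)).comp v ((hasDerivAt_id v).div_const vth)
  have hG : HasDerivAt (fun w : ℝ => Real.exp (-(w ^ 2) / (2 * vth ^ 2)))
      (Real.exp (-(v ^ 2) / (2 * vth ^ 2)) * (-(2 * v) / (2 * vth ^ 2))) v := by
    have hexp : HasDerivAt (fun w : ℝ => -(w ^ 2) / (2 * vth ^ 2)) (-(2 * v) / (2 * vth ^ 2)) v := by
      simpa using (hasDerivAt_pow 2 v).neg.div_const (2 * vth ^ 2)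
    exact hexp.exp
  refine ((hH.mul hG).div_const (Real.sqrt (2 * Real.pi))).congr_deriv ?_
  have hrec := sqrt_mul_normHermite_succ n (v / vth)
  simp only [Psi]
  linear_combination Real.exp (-(v ^ 2) / (2 * vth ^ 2)) / vth / Real.sqrt (2 * Real.pi) * hrec

lemma sum_vlasov_eq_sum_modes_add_boundary (vth v e : ℝ) (Ψ T X c : ℕ → ℝ)
    (hΨ : ∀ n : ℕ, v * Ψ n = vth * (Real.sqrt (n + 1) * Ψ (n + 1) + Real.sqrt n * Ψ (n - 1)))
    (K : ℕ) :
    (∑ n ∈ range K, T n * Ψ n) + v * (∑ n ∈ range K, X n * Ψ n)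
        + e * (∑ n ∈ range K, c n * (-(Real.sqrt (n + 1) / vth) * Ψ (n + 1)))
      = (∑ m ∈ range K,
          (T m + vth * (Real.sqrt (m + 1) * X (m + 1) + Real.sqrt m * X (m - 1))
            - (Real.sqrt m / vth) * e * c (m - 1)) * Ψ m)
        + Real.sqrt K * (vth * X (K - 1) - (1 / vth) * e * c (K - 1)) * Ψ K
        - vth * Real.sqrt K * X K * Ψ (K - 1) := by
  induction K with
  | zero => simp
  | succ K ih =>
    simp only [sum_range_succ, Nat.add_sub_cancel]
    push_cast
    linear_combination ih + X K * hΨ K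

theorem hermite_truncation_residual
    (vth : ℝ) (hvth : 0 < vth) (N : ℕ)
    (C : ℕ → ℝ → ℝ → ℝ) (E : ℝ → ℝ → ℝ)
    -- regularity: each `C n` is C¹ in (t,x), `E` is continuous
    (hC1 : ∀ n, ContDiff ℝ 1 (fun p : ℝ × ℝ => C n p.1 p.2))
    -- truncation convention `C_N = 0` (and beyond)
    (hCtop : ∀ n, N ≤ n → C n = 0)
    -- the mode equations (the `n = 0` case of `C (n-1)` is irrelevant
    -- since `√0 = 0`)
    (hmode : ∀ n, n < N → ∀ t x,
      deriv (fun s => C n s x) t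
        + vth * (Real.sqrt (n + 1) * deriv (fun y => C (n + 1) t y) x
            + Real.sqrt n * deriv (fun y => C (n - 1) t y) x)
        - (Real.sqrt n / vth) * E t x * C (n - 1) t x = 0) :
    ∀ t x v,
      deriv (fun s => ∑ n ∈ Finset.range N, C n s x * Psi vth n v) t
        + v * deriv (fun y => ∑ n ∈ Finset.range N, C n t y * Psi vth n v) x
        + E t x * deriv (fun w => ∑ n ∈ Finset.range N, C n t x * Psi vth n w) v
      = Real.sqrt N * (vth * deriv (fun y => C (N - 1) t y) x
          - (1 / vth) * E t x * C (N - 1) t x) * Psi vth N v := by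
  intro t x v
  have hC : ∀ n, Differentiable ℝ (fun p : ℝ × ℝ => C n p.1 p.2) := fun n =>
    (hC1 n).differentiable one_ne_zero
  have hCt : ∀ n, DifferentiableAt ℝ (fun s => C n s x) t := fun n =>
    ((hC n).comp (differentiable_id.prodMk (differentiable_const x))).differentiableAt
  have hCx : ∀ n, DifferentiableAt ℝ (fun y => C n t y) x := fun n =>
    ((hC n).comp ((differentiable_const t).prodMk differentiable_id)).differentiableAt
  have hΨ : ∀ n ∈ range N, HasDerivAt (fun w => C n t x * Psi vth n w)
      (C n t x * (-(Real.sqrt (n + 1) / vth) * Psi vth (n + 1) v)) v := fun n _ =>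
    (hasDerivAt_Psi vth n v).const_mul _
  have hCN : deriv (fun y => C N t y) x = 0 := by simp [hCtop N le_rfl]
  have hmodes : ∀ m ∈ range N, (deriv (fun s => C m s x) t
      + vth * (Real.sqrt (m + 1) * deriv (fun y => C (m + 1) t y) x
        + Real.sqrt m * deriv (fun y => C (m - 1) t y) x)
      - (Real.sqrt m / vth) * E t x * C (m - 1) t x) * Psi vth m v = 0 := fun m hm => by
    rw [hmode m (mem_range.mp hm) t x, zero_mul]
  rw [deriv_fun_sum fun n _ => (hCt n).mul_const _, deriv_fun_sum fun n _ => (hCx n).mul_const _,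
    (HasDerivAt.fun_sum hΨ).deriv]
  simp only [deriv_mul_const_field]
  rw [sum_vlasov_eq_sum_modes_add_boundary vth v (E t x) (fun n => Psi vth n v) _ _ _
    (fun n => mul_Psi hvth.ne' n v), sum_eq_zero hmodes, hCN]
  ring
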